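/- arXiv:2506.06466 — 2 statements merged into one kernel-verified Lean document; each statement's English description precedes it below -/
import Mathlib

section
/- For the ensemble {ρ̄₁ = |κ₁⟩⟨κ₁|, ρ̄₂ = |κ₂⟩⟨κ₂|} with equal prior probabilities 1/2 and the unsharp POVM {Ōⱼ} with sharpness λ, the average success probability (1/2)(Tr[(Ō₁+Ō₃)ρ̄₁] + Tr[(Ō₂+Ō₄)ρ̄₂]) equals 1/2 + λ²/2. -/
open scoped BigOperators Matrix

namespace SSDSE4

noncomputable def kappa1 (γ : ℝ) : Fin 2 × Fin 2 → ℂ :=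
  fun p => if p = (0, 1) then (Real.sqrt γ : ℂ)
    else if p = (1, 0) then (Real.sqrt (1 - γ) : ℂ) else 0

noncomputable def kappa2 (γ : ℝ) : Fin 2 × Fin 2 → ℂ :=
  fun p => if p = (0, 0) then (Real.sqrt γ : ℂ)
    else if p = (1, 1) then (Real.sqrt (1 - γ) : ℂ) else 0

def proj2 (a b : Fin 2) : Matrix (Fin 2 × Fin 2) (Fin 2 × Fin 2) ℂ :=
  fun p q => if p = (a, b) ∧ q = (a, b) then 1 else 0

/-- The unsharp POVM element with the (1+λ)² weight on |ab⟩ and (1−λ)² on |a'b'⟩,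
where (a',b') is the bit-flip of (a,b); the other two projectors get weight 1−λ². -/
noncomputable def Obar (lam : ℝ) (a b : Fin 2) :
    Matrix (Fin 2 × Fin 2) (Fin 2 × Fin 2) ℂ :=
  (1 / 4 : ℂ) • ((((1 + lam)^2 : ℝ) : ℂ) • proj2 a b
    + (((1 - lam)^2 : ℝ) : ℂ) • proj2 (1 - a) (1 - b)
    + (((1 - lam^2 : ℝ)) : ℂ) • (proj2 a (1 - b) + proj2 (1 - a) b))

theorem success_probability (γ₁ γ₂ lam : ℝ)
    (hγ₁ : γ₁ ∈ Set.Ioo (0:ℝ) 1) (hγ₂ : γ₂ ∈ Set.Ioo (0:ℝ) 1)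
    (hlam : lam ∈ Set.Icc (0:ℝ) 1) :
    (1 / 2 : ℂ) *
      (((Obar lam 0 1 + Obar lam 1 0) *
          Matrix.vecMulVec (kappa1 γ₁) (star (kappa1 γ₁))).trace
        + ((Obar lam 0 0 + Obar lam 1 1) *
          Matrix.vecMulVec (kappa2 γ₂) (star (kappa2 γ₂))).trace)
      = 1 / 2 + (lam^2 : ℝ) / 2 := by
  have h1 : (Real.sqrt γ₁ : ℂ) * (Real.sqrt γ₁ : ℂ) = (γ₁ : ℂ) := by
    norm_cast; exact Real.mul_self_sqrt hγ₁.1.le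
  have h2 : (Real.sqrt (1 - γ₁) : ℂ) * (Real.sqrt (1 - γ₁) : ℂ) = ((1 - γ₁ : ℝ) : ℂ) := by
    norm_cast; exact Real.mul_self_sqrt (by linarith [hγ₁.2])
  have h3 : (Real.sqrt γ₂ : ℂ) * (Real.sqrt γ₂ : ℂ) = (γ₂ : ℂ) := by
    norm_cast; exact Real.mul_self_sqrt hγ₂.1.le
  have h4 : (Real.sqrt (1 - γ₂) : ℂ) * (Real.sqrt (1 - γ₂) : ℂ) = ((1 - γ₂ : ℝ) : ℂ) := by
    norm_cast; exact Real.mul_self_sqrt (by linarith [hγ₂.2])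
  simp only [Matrix.trace, Matrix.diag, Matrix.mul_apply, Matrix.add_apply,
    Matrix.smul_apply, Obar, proj2, kappa1, kappa2, Matrix.vecMulVec_apply,
    Pi.star_apply, Fintype.sum_prod_type, Fin.sum_univ_two, apply_ite (star : ℂ → ℂ), star_zero]
  simp only [Prod.mk.injEq, show (1 - 0 : Fin 2) = 1 from rfl, show (1 - 1 : Fin 2) = 0 from rfl]
  norm_num [h1, h2, h3, h4, Complex.star_def, Complex.conj_ofReal]
  push_cast
  ring
end SSDSE4
end

section
/- For every separable state ρ on ℂ²⊗ℂ² and every g₁, g₂, g₃ with |g_q| ≤ 1, the operator W = (1/4)[I⊗I + Σ_{q=1}^3 g_q σ_q⊗σ_q] satisfies Tr[Wρ] ≥ 0, where σ_q are the Pauli matrices. -/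
/-!
For a product state `a ⊗ b`, `Tr[W (a ⊗ b)] = (1 + ∑_q g_q x_q y_q) / 4`, where `x_q = Tr(σ_q a)` and
`y_q = Tr(σ_q b)` are the (real) Bloch vectors. The identity `∑_q Tr(σ_q a)² = (Tr a)² - 4 det a`
together with `det a ≥ 0` puts the Bloch vector of a state in the closed unit ball, and then
`g_q x_q y_q ≥ -(x_q² + y_q²) / 2` gives `1 + ∑_q g_q x_q y_q ≥ 0`. A separable state is a convex
combination of product states and `ρ ↦ Tr[W ρ]` is linear.
-/

open scoped BigOperators Matrix Kronecker ComplexOrder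

namespace SSDSE13

def sigma1 : Matrix (Fin 2) (Fin 2) ℂ := !![0, 1; 1, 0]
noncomputable def sigma2 : Matrix (Fin 2) (Fin 2) ℂ := !![0, -Complex.I; Complex.I, 0]
def sigma3 : Matrix (Fin 2) (Fin 2) ℂ := !![1, 0; 0, -1]

/-- ρ is a separable state on ℂ²⊗ℂ². -/
def IsSeparableState (ρ : Matrix (Fin 2 × Fin 2) (Fin 2 × Fin 2) ℂ) : Prop :=
  ∃ (n : ℕ) (w : Fin n → ℝ) (a b : Fin n → Matrix (Fin 2) (Fin 2) ℂ),
    (∀ i, 0 ≤ w i) ∧ (∑ i, w i = 1) ∧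
    (∀ i, (a i).PosSemidef ∧ (a i).trace = 1) ∧
    (∀ i, (b i).PosSemidef ∧ (b i).trace = 1) ∧
    ρ = ∑ i, ((w i : ℝ) : ℂ) • (a i ⊗ₖ b i)

lemma _root_.one_add_sum_mul_mul_nonneg {ι : Type*} [Fintype ι] {g x y : ι → ℝ}
    (hg : ∀ i, |g i| ≤ 1) (hx : ∑ i, x i ^ 2 ≤ 1) (hy : ∑ i, y i ^ 2 ≤ 1) :
    0 ≤ 1 + ∑ i, g i * x i * y i := by
  have hterm : ∀ i, -((x i ^ 2 + y i ^ 2) / 2) ≤ g i * x i * y i := fun i => by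
    obtain ⟨hl, hr⟩ := abs_le.mp (hg i)
    nlinarith [mul_nonneg (by linarith : 0 ≤ 1 + g i) (sq_nonneg (x i + y i)),
      mul_nonneg (by linarith : 0 ≤ 1 - g i) (sq_nonneg (x i - y i))]
  have := Finset.sum_le_sum fun i (_ : i ∈ Finset.univ) => hterm i
  rw [Finset.sum_neg_distrib, ← Finset.sum_div, Finset.sum_add_distrib] at this
  linarith

lemma _root_.Matrix.IsHermitian.ofReal_re_trace_mul {n : Type*} [Fintype n] {A B : Matrix n n ℂ}
    (hA : A.IsHermitian) (hB : B.IsHermitian) : (((A * B).trace.re : ℝ) : ℂ) = (A * B).trace := by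
  rw [← Complex.conj_eq_iff_re, ← RCLike.star_def, ← Matrix.trace_conjTranspose,
    Matrix.conjTranspose_mul, hA.eq, hB.eq, Matrix.trace_mul_comm]

noncomputable def pauli : Fin 3 → Matrix (Fin 2) (Fin 2) ℂ := ![sigma1, sigma2, sigma3]

lemma pauli_isHermitian (q : Fin 3) : (pauli q).IsHermitian := by
  fin_cases q <;> ext i j <;> fin_cases i <;> fin_cases j <;>
    simp [pauli, sigma1, sigma2, sigma3, Matrix.conjTranspose_apply]

lemma sum_sq_trace_pauli_mul (a : Matrix (Fin 2) (Fin 2) ℂ) :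
    ∑ q, (pauli q * a).trace ^ 2 = a.trace ^ 2 - 4 * a.det := by
  simp only [Fin.sum_univ_three, pauli, sigma1, sigma2, sigma3, Matrix.cons_val_zero,
    Matrix.cons_val_one, Matrix.cons_val, Matrix.trace_fin_two, Matrix.det_fin_two,
    Matrix.mul_apply, Fin.sum_univ_two, Matrix.of_apply, Matrix.cons_val', Matrix.cons_val_fin_one]
  linear_combination (a 0 1 - a 1 0) ^ 2 * Complex.I_sq

lemma _root_.Matrix.PosSemidef.sum_sq_re_trace_pauli_mul_le_one {a : Matrix (Fin 2) (Fin 2) ℂ}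
    (ha : a.PosSemidef) (ht : a.trace = 1) : ∑ q, (pauli q * a).trace.re ^ 2 ≤ 1 := by
  have hsum : ((∑ q, (pauli q * a).trace.re ^ 2 : ℝ) : ℂ) = 1 - 4 * a.det := by
    push_cast
    simp only [(pauli_isHermitian _).ofReal_re_trace_mul ha.isHermitian]
    rw [sum_sq_trace_pauli_mul, ht, one_pow]
  have hdet : (0 : ℂ) ≤ 4 * a.det := mul_nonneg (by norm_num) ha.det_nonneg
  exact_mod_cast (show ((∑ q, (pauli q * a).trace.re ^ 2 : ℝ) : ℂ) ≤ 1 by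
    rw [hsum]; exact sub_le_self 1 hdet)

noncomputable def pauliWitness (g₁ g₂ g₃ : ℝ) : Matrix (Fin 2 × Fin 2) (Fin 2 × Fin 2) ℂ :=
  (1 / 4 : ℂ) • ((1 : Matrix (Fin 2 × Fin 2) (Fin 2 × Fin 2) ℂ)
    + (g₁ : ℂ) • (sigma1 ⊗ₖ sigma1) + (g₂ : ℂ) • (sigma2 ⊗ₖ sigma2)
    + (g₃ : ℂ) • (sigma3 ⊗ₖ sigma3))

lemma trace_pauliWitness_mul_kronecker (g₁ g₂ g₃ : ℝ) (a b : Matrix (Fin 2) (Fin 2) ℂ) :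
    (pauliWitness g₁ g₂ g₃ * (a ⊗ₖ b)).trace = 1 / 4 * (a.trace * b.trace
      + ∑ q, (![g₁, g₂, g₃] q : ℂ) * (pauli q * a).trace * (pauli q * b).trace) := by
  simp only [pauliWitness, Matrix.smul_mul, Matrix.add_mul, one_mul, ← Matrix.mul_kronecker_mul,
    Matrix.trace_smul, Matrix.trace_add, Matrix.trace_kronecker, Fin.sum_univ_three, pauli]
  simp only [Matrix.cons_val_zero, Matrix.cons_val_one, Matrix.cons_val, smul_eq_mul]
  ring

lemma re_trace_pauliWitness_mul_kronecker_nonneg {g₁ g₂ g₃ : ℝ}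
    (h₁ : |g₁| ≤ 1) (h₂ : |g₂| ≤ 1) (h₃ : |g₃| ≤ 1) {a b : Matrix (Fin 2) (Fin 2) ℂ}
    (ha : a.PosSemidef) (hta : a.trace = 1) (hb : b.PosSemidef) (htb : b.trace = 1) :
    0 ≤ (pauliWitness g₁ g₂ g₃ * (a ⊗ₖ b)).trace.re := by
  set x : Fin 3 → ℝ := fun q => (pauli q * a).trace.re
  set y : Fin 3 → ℝ := fun q => (pauli q * b).trace.re
  have hx : ∀ q, (pauli q * a).trace = x q := fun q =>
    ((pauli_isHermitian q).ofReal_re_trace_mul ha.isHermitian).symm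
  have hy : ∀ q, (pauli q * b).trace = y q := fun q =>
    ((pauli_isHermitian q).ofReal_re_trace_mul hb.isHermitian).symm
  have htrace : (pauliWitness g₁ g₂ g₃ * (a ⊗ₖ b)).trace
      = ((1 / 4 * (1 + ∑ q, ![g₁, g₂, g₃] q * x q * y q) : ℝ) : ℂ) := by
    rw [trace_pauliWitness_mul_kronecker, hta, htb]
    simp only [hx, hy]
    push_cast
    ring
  have hg : ∀ q, |![g₁, g₂, g₃] q| ≤ 1 := fun q => by fin_cases q <;> assumption
  rw [htrace, Complex.ofReal_re]
  exact mul_nonneg (by norm_num) (one_add_sum_mul_mul_nonneg hg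
    (ha.sum_sq_re_trace_pauli_mul_le_one hta) (hb.sum_sq_re_trace_pauli_mul_le_one htb))

lemma IsSeparableState.re_trace_mul_nonneg {W ρ : Matrix (Fin 2 × Fin 2) (Fin 2 × Fin 2) ℂ}
    (hρ : IsSeparableState ρ)
    (hW : ∀ a b : Matrix (Fin 2) (Fin 2) ℂ, a.PosSemidef → a.trace = 1 → b.PosSemidef →
      b.trace = 1 → 0 ≤ (W * (a ⊗ₖ b)).trace.re) :
    0 ≤ (W * ρ).trace.re := by
  obtain ⟨n, w, a, b, hw, -, ha, hb, rfl⟩ := hρ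
  simp only [Matrix.mul_sum, Matrix.trace_sum, Complex.re_sum, Matrix.mul_smul, Matrix.trace_smul,
    smul_eq_mul, Complex.re_ofReal_mul]
  exact Finset.sum_nonneg fun i _ => mul_nonneg (hw i) (hW _ _ (ha i).1 (ha i).2 (hb i).1 (hb i).2)

theorem witness_nonneg_on_separable (g₁ g₂ g₃ : ℝ)
    (h₁ : |g₁| ≤ 1) (h₂ : |g₂| ≤ 1) (h₃ : |g₃| ≤ 1)
    (ρ : Matrix (Fin 2 × Fin 2) (Fin 2 × Fin 2) ℂ) (hρ : IsSeparableState ρ) :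
    0 ≤ (((1 / 4 : ℂ) • ((1 : Matrix (Fin 2 × Fin 2) (Fin 2 × Fin 2) ℂ)
        + (g₁ : ℂ) • (sigma1 ⊗ₖ sigma1) + (g₂ : ℂ) • (sigma2 ⊗ₖ sigma2)
        + (g₃ : ℂ) • (sigma3 ⊗ₖ sigma3)) * ρ).trace).re := by
  show 0 ≤ (pauliWitness g₁ g₂ g₃ * ρ).trace.re
  exact hρ.re_trace_mul_nonneg fun _ _ ha hta hb htb =>
    re_trace_pauliWitness_mul_kronecker_nonneg h₁ h₂ h₃ ha hta hb htb

end SSDSE13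
end
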